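/- For every positive integer n and every r ∈ ℝ, |ξ_n'(r) + 2·max(−r,0)| ≤ 5/n; in particular the derivative ξ_n' converges uniformly on ℝ to the function r ↦ −2 r⁻ as n → ∞. -/

import Mathlib

/-- The auxiliary function from the proof of Lemma 5.1. -/
noncomputable def xiAux (r : ℝ) : ℝ :=
  if r ≤ 0 then r ^ 2 else if r ≤ 1 then r ^ 2 * (1 - r) ^ 3 else 0

/-- The rescaled auxiliary functions `ξ_n(r) = ξ(n r) / n²`. -/
noncomputable def xiAuxN (n : ℕ) (r : ℝ) : ℝ := xiAux (n * r) / (n : ℝ) ^ 2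

/-!
ξ is C¹ with ξ'(s) = 2s for s ≤ 0, so the defect ξ'(s) + 2 s⁻ vanishes outside (0, 1) and is
at most 5 in absolute value on it. Since ξ_n'(r) = ξ'(n r) / n and r⁻ = (n r)⁻ / n, the defect of
ξ_n at r is that of ξ at n r divided by n.
-/

open Filter Set Topology

theorem hasDerivAt_ite_le {F : Type*} [NormedAddCommGroup F] [NormedSpace ℝ F]
    {f g : ℝ → F} {f' g' : F} {a r : ℝ} (hf : r ≤ a → HasDerivAt f f' r)
    (hg : a ≤ r → HasDerivAt g g' r) (hfg : r = a → f a = g a ∧ f' = g') :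
    HasDerivAt (fun x => if x ≤ a then f x else g x) (if r ≤ a then f' else g') r := by
  rcases lt_trichotomy r a with hr | rfl | hr
  · rw [if_pos hr.le]
    refine (hf hr.le).congr_of_eventuallyEq ?_
    filter_upwards [Iio_mem_nhds hr] with x hx using if_pos (le_of_lt hx)
  · obtain ⟨hval, rfl⟩ := hfg rfl
    rw [if_pos le_rfl]
    have left : HasDerivWithinAt (fun x => if x ≤ r then f x else g x) f' (Iic r) r :=
      (hf le_rfl).hasDerivWithinAt.congr (fun x hx => if_pos hx) (if_pos le_rfl)
    have right : HasDerivWithinAt (fun x => if x ≤ r then f x else g x) f' (Ici r) r := by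
      refine (hg le_rfl).hasDerivWithinAt.congr (fun x hx => ?_) (by rw [if_pos le_rfl, hval])
      split_ifs with hxr
      · rw [le_antisymm hxr hx, hval]
      · rfl
    have := left.union right
    rw [Iic_union_Ici] at this
    exact this.hasDerivAt univ_mem
  · rw [if_neg hr.not_ge]
    refine (hg hr.le).congr_of_eventuallyEq ?_
    filter_upwards [Ioi_mem_nhds hr] with x hx using if_neg (not_le.2 hx)

theorem hasDerivAt_sq_mul_one_sub_pow_three (x : ℝ) :
    HasDerivAt (fun x : ℝ => x ^ 2 * (1 - x) ^ 3) (x * (1 - x) ^ 2 * (2 - 5 * x)) x := by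
  have := (hasDerivAt_pow 2 x).fun_mul (((hasDerivAt_id' x).const_sub 1).fun_pow 3)
  exact this.congr_deriv (by push_cast; ring)

noncomputable def xiAuxDeriv (s : ℝ) : ℝ :=
  if s ≤ 0 then 2 * s else if s ≤ 1 then s * (1 - s) ^ 2 * (2 - 5 * s) else 0

theorem hasDerivAt_xiAux (s : ℝ) : HasDerivAt xiAux (xiAuxDeriv s) s := by
  have inner : 0 ≤ s → HasDerivAt (fun x : ℝ => if x ≤ 1 then x ^ 2 * (1 - x) ^ 3 else 0)
      (if s ≤ 1 then s * (1 - s) ^ 2 * (2 - 5 * s) else 0) s := fun _ =>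
    hasDerivAt_ite_le (fun _ => hasDerivAt_sq_mul_one_sub_pow_three s)
      (fun _ => hasDerivAt_const s 0) (by rintro rfl; norm_num)
  exact hasDerivAt_ite_le (fun _ => by simpa using (hasDerivAt_pow 2 s))
    inner (by rintro rfl; norm_num)

theorem abs_xiAuxDeriv_add_le (s : ℝ) : |xiAuxDeriv s + 2 * max (-s) 0| ≤ 5 := by
  unfold xiAuxDeriv
  split_ifs with h0 h1
  · rw [max_eq_left (by linarith)]; norm_num
  · rw [max_eq_right (by linarith), abs_le]
    constructor <;> nlinarith [mul_nonneg (sq_nonneg (1 - s)) (by linarith : (0:ℝ) ≤ s)]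
  · rw [max_eq_right (by linarith)]; norm_num

theorem HasDerivAt.comp_mul_div_sq {φ : ℝ → ℝ} {φ' c r : ℝ} (hc : c ≠ 0)
    (hφ : HasDerivAt φ φ' (c * r)) :
    HasDerivAt (fun x => φ (c * x) / c ^ 2) (φ' / c) r := by
  have := (hφ.comp r ((hasDerivAt_id r).const_mul c)).div_const (c ^ 2)
  exact this.congr_deriv (by field_simp)

theorem tendstoUniformly_of_dist_le {ι α β : Type*} [PseudoMetricSpace β] {p : Filter ι}
    {F : ι → α → β} {f : α → β} {b : ι → ℝ} (hb : Tendsto b p (𝓝 0))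
    (h : ∀ᶠ i in p, ∀ x, dist (f x) (F i x) ≤ b i) : TendstoUniformly F f p :=
  Metric.tendstoUniformly_iff.2 fun _ hε =>
    (h.and (hb.eventually (gt_mem_nhds hε))).mono fun _ hi x => (hi.1 x).trans_lt hi.2

theorem hasDerivAt_xiAuxN {n : ℕ} (hn : n ≠ 0) (r : ℝ) :
    HasDerivAt (xiAuxN n) (xiAuxDeriv (n * r) / n) r :=
  (hasDerivAt_xiAux _).comp_mul_div_sq (Nat.cast_ne_zero.2 hn)

theorem abs_deriv_xiAuxN_add_le {n : ℕ} (hn : 0 < n) (r : ℝ) :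
    |deriv (xiAuxN n) r + 2 * max (-r) 0| ≤ 5 / n := by
  have hn' : (0 : ℝ) < n := Nat.cast_pos.2 hn
  have hmax : max (-(n * r)) 0 = n * max (-r) 0 := by
    rw [mul_max_of_nonneg _ _ hn'.le, mul_zero, mul_neg]
  have scaled : deriv (xiAuxN n) r + 2 * max (-r) 0
      = (xiAuxDeriv (n * r) + 2 * max (-(n * r)) 0) / n := by
    rw [(hasDerivAt_xiAuxN hn.ne' r).deriv, hmax]
    field_simp
  rw [scaled, abs_div, abs_of_pos hn']
  exact div_le_div_of_nonneg_right (abs_xiAuxDeriv_add_le _) hn'.le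

theorem stmt_8 :
    (∀ n : ℕ, 0 < n → ∀ r : ℝ, |deriv (xiAuxN n) r + 2 * max (-r) 0| ≤ 5 / (n : ℝ)) ∧
    TendstoUniformly (fun (n : ℕ) (r : ℝ) => deriv (xiAuxN n) r)
      (fun r => -(2 * max (-r) 0)) Filter.atTop := by
  refine ⟨fun n hn => abs_deriv_xiAuxN_add_le hn,
    tendstoUniformly_of_dist_le (tendsto_const_div_atTop_nhds_zero_nat 5) ?_⟩
  filter_upwards [eventually_gt_atTop 0] with n hn r
  rw [dist_comm, Real.dist_eq, sub_neg_eq_add]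
  exact abs_deriv_xiAuxN_add_le hn r
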